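/- Let g_x, g_v be real numbers and ρ_{x,j}, ρ_{v,j} (j = −2,…,2) real coefficients with ρ_{x,0} = ρ_{v,0} = 1 and Σ_{j=-2}^{2} ρ_{x,j} = Σ_{j=-2}^{2} ρ_{v,j} = 0. Define λ_x(φ) = g_x·Σ_{j=-2}^{2} ρ_{x,j} e^{iφj}, λ_v(φ) = g_v·Σ_{j=-2}^{2} ρ_{v,j} e^{iφj}, α_{x,1} = ρ_{x,1} + ρ_{x,−1}, α_{v,1} = ρ_{v,1} + ρ_{v,−1}, β_{x,1} = ρ_{x,1} − ρ_{x,−1}, β_{x,2} = ρ_{x,2} − ρ_{x,−2}, β_{v,1} = ρ_{v,1} − ρ_{v,−1}, β_{v,2} = ρ_{v,2} − ρ_{v,−2}, s = β_{v,1} + 2β_{v,2}, and D = g_v²·s² − 2g_x·(4 + 3α_{x,1}). Assume β_{x,1} + 2β_{x,2} = 0, D > 0, and g_v²·g_x·(4 + 3α_{v,1})²·(4 + 3α_{x,1}) + 2g_v²·g_x·s·(4 + 3α_{v,1})·β_{x,1} + 2g_x²·β_{x,1}² > 0. Then there exists ε > 0 such that for every φ with 0 < φ < ε there is a complex number ν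 with ν² − λ_v(φ)·ν − λ_x(φ) = 0 and Re ν > 0. -/

import Mathlib

/-!
The roots of `ν² - λ_v ν - λ_x` are `(λ_v ± w) / 2` with `w² = Δ := λ_v² + 4 λ_x`. Choosing
`Re w ≥ 0`, the root `(λ_v + w) / 2` has positive real part as soon as `(Re λ_v)² < (Re w)²`;
since `‖Δ‖ - Re Δ = 2 (Im w)²` and `Im Δ = 2 Re w Im w`, this follows from
`2 (Re λ_v)² (‖Δ‖ - Re Δ) < (Im Δ)²`.

As `φ → 0`, `Re λ ~ g (4 + 3α₁) φ² / 2` and `Im λ ~ g (β₁ + 2β₂) φ`; when `β₁ + 2β₂ = 0` the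
leading term of `Im λ` is `g β₁ φ³ / 2` instead. Hence `Re Δ ~ -D φ²` and `Im Δ ~ Y φ³` with
`Y = g_v² s (4 + 3α_{v,1}) + 2 g_x β_{x,1}`, and after dividing by `φ⁶` the sufficient condition
tends to `g_v² (4 + 3α_{v,1})² D < Y²`, whose two sides differ by twice the quantity assumed
positive.
-/

/-- The eigenvalue curve `λ(φ) = g·Σ_{j=-2}^{2} ρ_j e^{iφj}` of a circulant
next-nearest-neighbor Laplacian. -/
noncomputable def lam (g : ℝ) (ρ : ℤ → ℝ) (φ : ℝ) : ℂ :=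
  (g : ℂ) * ∑ j ∈ Finset.Icc (-2 : ℤ) 2,
    (ρ j : ℂ) * Complex.exp (Complex.I * (φ : ℂ) * (j : ℂ))

open Real Filter Topology

lemma sum_Icc_neg_two_two {M : Type*} [AddCommMonoid M] (f : ℤ → M) :
    ∑ j ∈ Finset.Icc (-2 : ℤ) 2, f j = f (-2) + f (-1) + f 0 + f 1 + f 2 := by
  rw [show Finset.Icc (-2 : ℤ) 2 = {-2, -1, 0, 1, 2} by decide]
  simp [Finset.sum_insert, add_assoc]

lemma lam_eq_sum_exp_mul_I (g : ℝ) (ρ : ℤ → ℝ) (φ : ℝ) :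
    lam g ρ φ =
      g * ∑ j ∈ Finset.Icc (-2 : ℤ) 2, (ρ j : ℂ) * Complex.exp ((j * φ : ℝ) * Complex.I) := by
  simp only [lam]
  push_cast
  ring_nf

lemma lam_re (g : ℝ) (ρ : ℤ → ℝ) (φ : ℝ) :
    (lam g ρ φ).re = g * (ρ 0 + (ρ 1 + ρ (-1)) * cos φ + (ρ 2 + ρ (-2)) * cos (2 * φ)) := by
  rw [lam_eq_sum_exp_mul_I, Complex.re_ofReal_mul, Complex.re_sum, sum_Icc_neg_two_two]
  simp only [Complex.re_ofReal_mul, Complex.exp_ofReal_mul_I_re]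
  push_cast
  simp only [neg_mul, cos_neg, one_mul, zero_mul, cos_zero]
  ring

lemma lam_im (g : ℝ) (ρ : ℤ → ℝ) (φ : ℝ) :
    (lam g ρ φ).im = g * sin φ * ((ρ 1 - ρ (-1)) + 2 * (ρ 2 - ρ (-2)) * cos φ) := by
  rw [lam_eq_sum_exp_mul_I, Complex.im_ofReal_mul, Complex.im_sum, sum_Icc_neg_two_two]
  simp only [Complex.im_ofReal_mul, Complex.exp_ofReal_mul_I_im]
  push_cast
  simp only [neg_mul, sin_neg, one_mul, zero_mul, sin_zero, sin_two_mul]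
  ring

lemma one_sub_cos_eq_two_mul_sin_half_sq (φ : ℝ) : 1 - cos φ = 2 * sin (φ / 2) ^ 2 := by
  nth_rewrite 1 [← mul_div_cancel₀ φ (two_ne_zero' ℝ)]
  rw [cos_two_mul', ← sin_sq_add_cos_sq (φ / 2)]
  ring

lemma tendsto_sin_div_self : Tendsto (fun φ => sin φ / φ) (𝓝[≠] 0) (𝓝 1) := by
  have h : Tendsto sinc (𝓝[≠] 0) (𝓝 1) :=
    sinc_zero ▸ (continuous_sinc.tendsto 0).mono_left nhdsWithin_le_nhds
  exact h.congr' (eventually_nhdsWithin_of_forall fun φ hφ => sinc_of_ne_zero hφ)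

lemma tendsto_one_sub_cos_div_sq :
    Tendsto (fun φ => (1 - cos φ) / φ ^ 2) (𝓝[≠] 0) (𝓝 (1 / 2)) := by
  have hc : Continuous fun φ : ℝ => sinc (φ / 2) ^ 2 / 2 :=
    ((continuous_sinc.comp (continuous_id.div_const 2)).pow 2).div_const 2
  have h : Tendsto (fun φ : ℝ => sinc (φ / 2) ^ 2 / 2) (𝓝[≠] 0) (𝓝 (1 / 2)) := by
    simpa using (hc.tendsto 0).mono_left nhdsWithin_le_nhds
  refine h.congr' (eventually_nhdsWithin_of_forall fun φ (hφ : φ ≠ 0) => ?_)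
  dsimp only
  rw [sinc_of_ne_zero (div_ne_zero hφ two_ne_zero), one_sub_cos_eq_two_mul_sin_half_sq]
  field_simp

lemma tendsto_lam_re_div_sq (g : ℝ) (ρ : ℤ → ℝ) (h0 : ρ 0 = 1)
    (hsum : ∑ j ∈ Finset.Icc (-2 : ℤ) 2, ρ j = 0) :
    Tendsto (fun φ => (lam g ρ φ).re / φ ^ 2) (𝓝[≠] 0)
      (𝓝 (g * (4 + 3 * (ρ 1 + ρ (-1))) / 2)) := by
  rw [sum_Icc_neg_two_two, h0] at hsum
  have h := (tendsto_one_sub_cos_div_sq.const_mul g).mul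
    (((continuous_cos.tendsto 0).mono_left nhdsWithin_le_nhds).const_mul
      (2 * (1 + (ρ 1 + ρ (-1)))) |>.const_add (2 + (ρ 1 + ρ (-1))))
  rw [cos_zero] at h
  convert h using 2 with φ
  · rw [lam_re, h0, cos_two_mul]
    linear_combination (g * (2 * cos φ ^ 2 - 1) / φ ^ 2) * hsum
  · ring

lemma tendsto_lam_im_div (g : ℝ) (ρ : ℤ → ℝ) :
    Tendsto (fun φ => (lam g ρ φ).im / φ) (𝓝[≠] 0)
      (𝓝 (g * ((ρ 1 - ρ (-1)) + 2 * (ρ 2 - ρ (-2))))) := by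
  have h := (tendsto_sin_div_self.const_mul g).mul
    (((continuous_cos.tendsto 0).mono_left nhdsWithin_le_nhds).const_mul
      (2 * (ρ 2 - ρ (-2))) |>.const_add (ρ 1 - ρ (-1)))
  rw [cos_zero] at h
  convert h using 2 with φ
  · rw [lam_im]
    ring
  · ring

lemma tendsto_lam_im_div_cube (g : ℝ) (ρ : ℤ → ℝ)
    (hβ : (ρ 1 - ρ (-1)) + 2 * (ρ 2 - ρ (-2)) = 0) :
    Tendsto (fun φ => (lam g ρ φ).im / φ ^ 3) (𝓝[≠] 0) (𝓝 (g * (ρ 1 - ρ (-1)) / 2)) := by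
  have h := ((tendsto_sin_div_self.const_mul (g * (ρ 1 - ρ (-1)))).mul
    tendsto_one_sub_cos_div_sq)
  convert h using 2 with φ
  · rw [lam_im]
    linear_combination (g * sin φ * cos φ / φ ^ 3) * hβ
  · ring

lemma exists_root_re_pos_of_lt {b c : ℂ}
    (h : 2 * b.re ^ 2 * (‖b ^ 2 + 4 * c‖ - (b ^ 2 + 4 * c).re) < (b ^ 2 + 4 * c).im ^ 2) :
    ∃ ν : ℂ, ν ^ 2 - b * ν - c = 0 ∧ 0 < ν.re := by
  obtain ⟨w, hw⟩ := IsAlgClosed.exists_pow_nat_eq (b ^ 2 + 4 * c) two_pos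
  wlog hw0 : 0 ≤ w.re generalizing w
  · exact this (-w) (by rw [neg_sq, hw]) (by rw [Complex.neg_re]; linarith)
  rw [← hw] at h
  have hnorm : ‖w ^ 2‖ = w.re ^ 2 + w.im ^ 2 := by
    rw [norm_pow, Complex.sq_norm, Complex.normSq_apply]; ring
  have hsq : b.re ^ 2 < w.re ^ 2 := by
    rw [hnorm] at h
    simp only [sq, Complex.mul_re, Complex.mul_im] at h
    nlinarith [sq_nonneg w.im]
  refine ⟨(b + w) / 2, by linear_combination hw / 4, ?_⟩
  have habs := sq_lt_sq.mp hsq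
  simp only [Complex.div_ofNat_re, Complex.add_re]
  linarith [neg_abs_le b.re, abs_of_nonneg hw0]

lemma tendsto_re_sq_add_four_mul_div_sq {b c : ℝ → ℂ} {p s u : ℝ}
    (hbre : Tendsto (fun φ => (b φ).re / φ ^ 2) (𝓝[≠] 0) (𝓝 p))
    (hbim : Tendsto (fun φ => (b φ).im / φ) (𝓝[≠] 0) (𝓝 s))
    (hcre : Tendsto (fun φ => (c φ).re / φ ^ 2) (𝓝[≠] 0) (𝓝 u)) :
    Tendsto (fun φ => (b φ ^ 2 + 4 * c φ).re / φ ^ 2) (𝓝[≠] 0) (𝓝 (4 * u - s ^ 2)) := by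
  have hid : Tendsto (fun φ : ℝ => φ) (𝓝[≠] 0) (𝓝 0) :=
    tendsto_nhdsWithin_of_tendsto_nhds tendsto_id
  have h := ((hbre.pow 2).mul (hid.pow 2)).sub (hbim.pow 2) |>.add (hcre.const_mul 4)
  rw [zero_pow two_ne_zero, mul_zero, zero_sub, neg_add_eq_sub] at h
  refine h.congr' (eventually_nhdsWithin_of_forall fun φ (hφ : φ ≠ 0) => ?_)
  simp only [Complex.add_re, Complex.mul_re, sq, Complex.re_ofNat, Complex.im_ofNat, zero_mul,
    sub_zero]
  field_simp

lemma tendsto_im_sq_add_four_mul_div_cube {b c : ℝ → ℂ} {p s v : ℝ}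
    (hbre : Tendsto (fun φ => (b φ).re / φ ^ 2) (𝓝[≠] 0) (𝓝 p))
    (hbim : Tendsto (fun φ => (b φ).im / φ) (𝓝[≠] 0) (𝓝 s))
    (hcim : Tendsto (fun φ => (c φ).im / φ ^ 3) (𝓝[≠] 0) (𝓝 v)) :
    Tendsto (fun φ => (b φ ^ 2 + 4 * c φ).im / φ ^ 3) (𝓝[≠] 0) (𝓝 (2 * p * s + 4 * v)) := by
  have h := ((hbre.mul hbim).const_mul 2).add (hcim.const_mul 4)
  rw [← mul_assoc] at h
  refine h.congr' (eventually_nhdsWithin_of_forall fun φ (hφ : φ ≠ 0) => ?_)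
  simp only [Complex.add_im, Complex.mul_im, sq, Complex.re_ofNat, Complex.im_ofNat, zero_mul,
    add_zero]
  field_simp
  ring

lemma eventually_exists_root_re_pos {b c : ℝ → ℂ} {p s u v : ℝ}
    (hbre : Tendsto (fun φ => (b φ).re / φ ^ 2) (𝓝[≠] 0) (𝓝 p))
    (hbim : Tendsto (fun φ => (b φ).im / φ) (𝓝[≠] 0) (𝓝 s))
    (hcre : Tendsto (fun φ => (c φ).re / φ ^ 2) (𝓝[≠] 0) (𝓝 u))
    (hcim : Tendsto (fun φ => (c φ).im / φ ^ 3) (𝓝[≠] 0) (𝓝 v))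
    (h : 2 * p ^ 2 * (|4 * u - s ^ 2| - (4 * u - s ^ 2)) < (2 * p * s + 4 * v) ^ 2) :
    ∀ᶠ φ in 𝓝[≠] 0, ∃ ν : ℂ, ν ^ 2 - b φ * ν - c φ = 0 ∧ 0 < ν.re := by
  set Q := fun φ => b φ ^ 2 + 4 * c φ
  have hid : Tendsto (fun φ : ℝ => φ) (𝓝[≠] 0) (𝓝 0) :=
    tendsto_nhdsWithin_of_tendsto_nhds tendsto_id
  have hX := tendsto_re_sq_add_four_mul_div_sq hbre hbim hcre
  have hY := tendsto_im_sq_add_four_mul_div_cube hbre hbim hcim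
  have hF := ((hbre.pow 2).const_mul 2).mul ((hX.abs.sub hX).add (hY.mul hid).abs)
  rw [mul_zero, abs_zero, add_zero] at hF
  filter_upwards [hF.eventually_lt (hY.pow 2) h, self_mem_nhdsWithin] with φ hlt (hφ : φ ≠ 0)
  apply exists_root_re_pos_of_lt
  have hφ2 : 0 < φ ^ 2 := by positivity
  calc 2 * (b φ).re ^ 2 * (‖Q φ‖ - (Q φ).re)
      ≤ 2 * (b φ).re ^ 2 * (|(Q φ).re| - (Q φ).re + |(Q φ).im|) := by
        gcongr
        linarith [Complex.norm_le_abs_re_add_abs_im (Q φ)]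
    _ = (φ ^ 2) ^ 3 * (2 * ((b φ).re / φ ^ 2) ^ 2 * (|(Q φ).re / φ ^ 2| - (Q φ).re / φ ^ 2
          + |(Q φ).im / φ ^ 3 * φ|)) := by
        have e : (Q φ).im / φ ^ 3 * φ = (Q φ).im / φ ^ 2 := by field_simp
        rw [e, abs_div, abs_div, abs_of_pos hφ2]
        field_simp
    _ < (φ ^ 2) ^ 3 * ((Q φ).im / φ ^ 3) ^ 2 := by gcongr
    _ = (Q φ).im ^ 2 := by field_simp

/-- Corollary 1(ii) of the paper: if `β_{x,1} + 2β_{x,2} = 0`,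
`D = g_v²s² − 2g_x(4+3α_{x,1}) > 0` (with `s = β_{v,1}+2β_{v,2}`), and
`g_v²g_x(4+3α_{v,1})²(4+3α_{x,1}) + 2g_v²g_x s(4+3α_{v,1})β_{x,1} + 2g_x²β_{x,1}² > 0`,
then for all sufficiently small `φ > 0` the characteristic equation has a
root with positive real part. -/
theorem unstable_of_second_order_pos (gx gv : ℝ) (ρx ρv : ℤ → ℝ)
    (hx0 : ρx 0 = 1) (hv0 : ρv 0 = 1)
    (hxsum : ∑ j ∈ Finset.Icc (-2 : ℤ) 2, ρx j = 0)
    (hvsum : ∑ j ∈ Finset.Icc (-2 : ℤ) 2, ρv j = 0)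
    (hbx : (ρx 1 - ρx (-1)) + 2 * (ρx 2 - ρx (-2)) = 0)
    (hD : 0 < gv ^ 2 * ((ρv 1 - ρv (-1)) + 2 * (ρv 2 - ρv (-2))) ^ 2
        - 2 * gx * (4 + 3 * (ρx 1 + ρx (-1))))
    (hsec : 0 < gv ^ 2 * gx * (4 + 3 * (ρv 1 + ρv (-1))) ^ 2
          * (4 + 3 * (ρx 1 + ρx (-1)))
        + 2 * gv ^ 2 * gx * ((ρv 1 - ρv (-1)) + 2 * (ρv 2 - ρv (-2)))
          * (4 + 3 * (ρv 1 + ρv (-1))) * (ρx 1 - ρx (-1))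
        + 2 * gx ^ 2 * (ρx 1 - ρx (-1)) ^ 2) :
    ∃ ε > 0, ∀ φ : ℝ, 0 < φ → φ < ε →
      ∃ ν : ℂ, ν ^ 2 - lam gv ρv φ * ν - lam gx ρx φ = 0 ∧ 0 < ν.re := by
  have hroots := eventually_exists_root_re_pos (tendsto_lam_re_div_sq gv ρv hv0 hvsum)
    (tendsto_lam_im_div gv ρv) (tendsto_lam_re_div_sq gx ρx hx0 hxsum)
    (tendsto_lam_im_div_cube gx ρx hbx) ?_
  · obtain ⟨ε, hε, hsub⟩ := mem_nhdsGT_iff_exists_Ioo_subset.mp (nhdsGT_le_nhdsNE 0 hroots)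
    exact ⟨ε, hε, fun φ hφ hφε => hsub ⟨hφ, hφε⟩⟩
  · rw [abs_of_neg (by linarith)]
    linear_combination 2 * hsec
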